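/- arXiv:1208.6172 — 9 statements merged into one kernel-verified Lean document; each statement's English description precedes it below -/
import Mathlib

section
/- Let a monoid V act on an additive commutative monoid H, where H is idempotent, the insertion property holds, and the EF-identity v • h + h = v • h holds for all v : V and h : H. If v₁ • h₁ = h and v₂ • h₂ = h for some v₁, v₂ : V and h₁, h₂, h : H, then there exists u : V with u • (h₁ + h₂) = h. (Hence the set {g : H | ∃ v, v • g = h}, together with the absorbing element, is closed under addition.) -/
theorem reachable_closed_under_add_general {V H : Type*} [Monoid V] [AddCommMonoid H]
    [MulAction V H]
    (ins : ∀ h : H, ∃ c : V, ∀ g : H, c • g = g + h)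
    (ef : ∀ (v : V) (h : H), v • h + h = v • h)
    (v₁ v₂ : V) (h₁ h₂ h : H)
    (hv₁ : v₁ • h₁ = h) (hv₂ : v₂ • h₂ = h) :
    ∃ u : V, u • (h₁ + h₂) = h := by
  -- By the EF-identity, `h` absorbs everything it is reachable from.
  have absorbs₁ : h + h₁ = h := hv₁ ▸ ef v₁ h₁
  have absorbs₂ : h + h₂ = h := hv₂ ▸ ef v₂ h₂
  obtain ⟨c, hc⟩ := ins h
  exact ⟨c, by rw [hc, add_comm, ← add_assoc, absorbs₁, absorbs₂]⟩

/-- In an EF-algebra (idempotent commutative horizontal monoid, insertion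
property, EF-identity), if `h` is reachable from both `h₁` and `h₂`, then `h`
is reachable from `h₁ + h₂`. -/
theorem reachable_closed_under_add {V H : Type*} [Monoid V] [AddCommMonoid H]
    [MulAction V H]
    (idem : ∀ h : H, h + h = h)
    (ins : ∀ h : H, ∃ c : V, ∀ g : H, c • g = g + h)
    (ef : ∀ (v : V) (h : H), v • h + h = v • h)
    (v₁ v₂ : V) (h₁ h₂ h : H)
    (hv₁ : v₁ • h₁ = h) (hv₂ : v₂ • h₂ = h) :
    ∃ u : V, u • (h₁ + h₂) = h :=
  reachable_closed_under_add_general ins ef v₁ v₂ h₁ h₂ h hv₁ hv₂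
end

section
/- Let a monoid V act faithfully on a finite additive commutative monoid H, with the insertion property, and suppose H is aperiodic. Let v : V be such that for every u : V there exists x : V with v * u * x = v (i.e. the right ideal vV is minimal). Then v acts as a constant: v • g = v • h for all g, h : H. -/
/-! The element `z = ∑ x, k • x` of `H` absorbs every `h`, since its summand `k • h` does by
aperiodicity. Inserting `z` gives some `c : V` acting as the constant `z`, and minimality of `vV`
writes `v = v * c * x`, so `v` factors through a constant map. -/

theorem sum_nsmul_add_eq_self {H : Type*} [AddCommMonoid H] [Fintype H] {k : ℕ}
    (hk : ∀ h : H, (k + 1) • h = k • h) (h : H) :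
    (∑ x : H, k • x) + h = ∑ x : H, k • x := by
  classical
  rw [← Finset.sum_erase_add _ _ (Finset.mem_univ h), add_assoc, ← succ_nsmul, hk]

theorem exists_add_eq_self_of_succ_nsmul_eq {H : Type*} [AddCommMonoid H] [Finite H] {k : ℕ}
    (hk : ∀ h : H, (k + 1) • h = k • h) : ∃ z : H, ∀ h : H, z + h = z :=
  have := Fintype.ofFinite H
  ⟨_, sum_nsmul_add_eq_self hk⟩

theorem smul_eq_smul_of_mul_mul_eq {V H : Type*} [Monoid V] [MulAction V H] {v c x : V}
    (hx : v * c * x = v) (hc : ∀ g h : H, c • g = c • h) (g h : H) : v • g = v • h := by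
  rw [← hx, mul_smul, mul_smul, mul_smul, mul_smul, hc]

theorem minimal_ideal_constant_general {V H : Type*} [Monoid V] [AddCommMonoid H]
    [MulAction V H] [Finite H]
    (ins : ∀ h : H, ∃ c : V, ∀ g : H, c • g = g + h)
    (aper : ∃ k : ℕ, 1 ≤ k ∧ ∀ h : H, (k + 1) • h = k • h)
    (v : V) (hmin : ∀ u : V, ∃ x : V, v * u * x = v) :
    ∀ g h : H, v • g = v • h := by
  obtain ⟨k, -, hk⟩ := aper
  obtain ⟨z, hz⟩ := exists_add_eq_self_of_succ_nsmul_eq hk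
  obtain ⟨c, hc⟩ := ins z
  have hc_const : ∀ g h : H, c • g = c • h := fun g h => by
    rw [hc, hc, add_comm, hz, add_comm, hz]
  obtain ⟨x, hx⟩ := hmin c
  exact smul_eq_smul_of_mul_mul_eq hx hc_const

/-- If `V` acts faithfully on a finite aperiodic commutative additive monoid
`H` with the insertion property, and the right ideal `vV` is minimal, then
`v` acts as a constant map. -/
theorem minimal_ideal_constant {V H : Type*} [Monoid V] [AddCommMonoid H]
    [MulAction V H] [FaithfulSMul V H] [Finite H]
    (ins : ∀ h : H, ∃ c : V, ∀ g : H, c • g = g + h)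
    (aper : ∃ k : ℕ, 1 ≤ k ∧ ∀ h : H, (k + 1) • h = k • h)
    (v : V) (hmin : ∀ u : V, ∃ x : V, v * u * x = v) :
    ∀ g h : H, v • g = v • h :=
  minimal_ideal_constant_general ins aper v hmin
end

section
/- Let a finite monoid V act on an additive commutative monoid H, with the insertion property, where H is aperiodic, and suppose the path identity and the fall-apart identity hold. If v, u : V are such that v * (u * w) = v for some w : V, then v • (g + u • 0) = v • g for all g : H (i.e. v = v(1 + u0)). -/
/-!
Put `m = u * w`, so `v * m = v`, and let `e = m ^ (n + 1)` be an idempotent power of `m`; then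
`v * e = v` and `e = u * s` for some `s`. The fall-apart identity for `e` says that `e`, hence `v`,
absorbs any number of summands `e • 0`. By the path identity for `u`, `(k + 1) • e • 0` equals
`y + k • u • 0` with `y = u • ((k + 1) • s • 0)`, so by aperiodicity
`v • (g + u • 0) = v • (g + y + (k + 1) • u • 0) = v • (g + y + k • u • 0) = v • g`.
-/

lemma exists_isIdempotentElem_pow_succ {M : Type*} [Monoid M] [Finite M] (a : M) :
    ∃ n : ℕ, IsIdempotentElem (a ^ (n + 1)) := by
  -- the positive powers of `a` form a finite, hence compact, subsemigroup for the discrete topology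
  let : TopologicalSpace M := ⊥
  have : DiscreteTopology M := ⟨rfl⟩
  obtain ⟨_, ⟨n, rfl⟩, hn⟩ := exists_idempotent_in_compact_subsemigroup
    (fun _ => continuous_of_discreteTopology) (Set.range fun n : ℕ => a ^ (n + 1))
    (Set.range_nonempty _) (Set.toFinite _).isCompact
    (by rintro _ ⟨i, rfl⟩ _ ⟨j, rfl⟩; exact ⟨i + j + 1, by rw [← pow_add]; ring_nf⟩)
  exact ⟨n, hn⟩

lemma mul_pow_eq_self_of_mul_eq_self {M : Type*} [Monoid M] {v m : M} (h : v * m = v) (n : ℕ) :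
    v * m ^ n = v := by
  induction n with
  | zero => rw [pow_zero, mul_one]
  | succ n ih => rw [pow_succ, ← mul_assoc, ih, h]

section Action

variable {V H : Type*} [Monoid V] [AddCommMonoid H] [MulAction V H]

lemma smul_add_nsmul_smul_zero {e v : V}
    (fall : ∀ g h : H, e • (g + h) = e • (g + e • h)) (hve : v * e = v) (n : ℕ) (x : H) :
    v • (x + n • e • (0 : H)) = v • x := by
  induction n with
  | zero => simp
  | succ n ih =>
    have absorb : ∀ z : H, v • (z + e • (0 : H)) = v • z := fun z => by
      rw [← hve, mul_smul, mul_smul, ← fall, add_zero]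
    rw [succ_nsmul, ← add_assoc, absorb, ih]

lemma succ_nsmul_smul_of_path {u : V}
    (path : ∀ g h : H, u • g + u • h = u • (g + h) + u • (0 : H)) (b : H) (n : ℕ) :
    (n + 1) • u • b = u • ((n + 1) • b) + n • u • (0 : H) := by
  induction n with
  | zero => simp
  | succ n ih =>
    calc (n + 1 + 1) • u • b
        = (u • ((n + 1) • b) + u • b) + n • u • (0 : H) := by rw [succ_nsmul, ih]; abel
      _ = u • ((n + 1 + 1) • b) + (n + 1) • u • (0 : H) := by
        rw [path, ← succ_nsmul, succ_nsmul (u • (0 : H)) n]; abel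

end Action

theorem stab_lemma_general {V H : Type*} [Monoid V] [Finite V] [AddCommMonoid H]
    [MulAction V H]
    (aper : ∃ k : ℕ, 1 ≤ k ∧ ∀ h : H, (k + 1) • h = k • h)
    (path : ∀ (v : V) (g h : H), v • g + v • h = v • (g + h) + v • (0 : H))
    (fall : ∀ u : V, u * u = u → ∀ g h : H, u • (g + h) = u • (g + u • h))
    (v u : V) (hw : ∃ w : V, v * (u * w) = v) :
    ∀ g : H, v • (g + u • (0 : H)) = v • g := by
  intro g
  obtain ⟨k, -, hk⟩ := aper
  obtain ⟨w, hvw⟩ := hw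
  obtain ⟨n, he⟩ := exists_isIdempotentElem_pow_succ (u * w)
  have split : (k + 1) • (u * w) ^ (n + 1) • (0 : H) =
      u • ((k + 1) • (w * (u * w) ^ n) • (0 : H)) + k • u • (0 : H) := by
    rw [pow_succ', mul_assoc, mul_smul]
    exact succ_nsmul_smul_of_path (path u) _ k
  have absorb : ∀ x : H, v • (x + (k + 1) • (u * w) ^ (n + 1) • (0 : H)) = v • x :=
    smul_add_nsmul_smul_zero (fall _ he) (mul_pow_eq_self_of_mul_eq_self hvw _) _
  set y := u • ((k + 1) • (w * (u * w) ^ n) • (0 : H))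
  calc v • (g + u • (0 : H))
      = v • (g + y + (k + 1) • u • (0 : H)) := by rw [← absorb, split, succ_nsmul]; abel_nf
    _ = v • g := by rw [hk, add_assoc, ← split, absorb]

/-- Stabilization lemma for path algebras: if `vu ∼ v` (i.e. `v * u * w = v`
for some `w`), then `v = v(1 + u0)`, i.e. `v • (g + u • 0) = v • g` for all
`g`. -/
theorem stab_lemma {V H : Type*} [Monoid V] [Finite V] [AddCommMonoid H]
    [MulAction V H]
    (ins : ∀ h : H, ∃ c : V, ∀ g : H, c • g = g + h)
    (aper : ∃ k : ℕ, 1 ≤ k ∧ ∀ h : H, (k + 1) • h = k • h)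
    (path : ∀ (v : V) (g h : H), v • g + v • h = v • (g + h) + v • (0 : H))
    (fall : ∀ u : V, u * u = u → ∀ g h : H, u • (g + h) = u • (g + u • h))
    (v u : V) (hw : ∃ w : V, v * (u * w) = v) :
    ∀ g : H, v • (g + u • (0 : H)) = v • g :=
  stab_lemma_general aper path fall v u hw
end

section
/- Let a monoid V act on an additive commutative monoid H and suppose the path identity holds. Then for every v : V, h : H, and every natural number m ≥ 1: m • (v • h) = v • (m • h) + (m - 1) • (v • 0). -/
theorem succ_nsmul_apply_of_path {M N : Type*} [AddCommMonoid M] [AddCommMonoid N] (f : M → N)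
    (hf : ∀ g h, f g + f h = f (g + h) + f 0) (h : M) (n : ℕ) :
    (n + 1) • f h = f ((n + 1) • h) + n • f 0 := by
  induction n with
  | zero => simp
  | succ n ih =>
    calc (n + 1 + 1) • f h = f ((n + 1) • h) + f h + n • f 0 := by
          rw [succ_nsmul, ih, add_right_comm]
      _ = f ((n + 1 + 1) • h) + (n + 1) • f 0 := by
          rw [hf, add_assoc, add_comm (f 0), ← succ_nsmul, ← succ_nsmul]

/-- Iterated form of the path identity:
`m • (v • h) = v • (m • h) + (m - 1) • (v • 0)` for `m ≥ 1`. -/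
theorem path_identity_iterated {V H : Type*} [Monoid V] [AddCommMonoid H]
    [MulAction V H]
    (path : ∀ (v : V) (g h : H), v • g + v • h = v • (g + h) + v • (0 : H)) :
    ∀ (v : V) (h : H) (m : ℕ), 1 ≤ m →
      m • (v • h) = v • (m • h) + (m - 1) • (v • (0 : H)) := by
  intro v h m hm
  obtain ⟨n, rfl⟩ := Nat.exists_eq_add_of_le' hm
  simpa using succ_nsmul_apply_of_path (v • ·) (path v) h n
end

section
/- Let a monoid V act on an additive commutative monoid H, suppose the path identity holds, and let k ≥ 1 be such that (k+1) • x = k • x for all x : H. Then for every v : V and every additively idempotent e : H (e + e = e): k • (v • e) = v • e + k • (v • 0). -/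
theorem succ_nsmul_eq_add_nsmul_of_add_self_eq {M : Type*} [AddCommMonoid M] {a b : M}
    (h : a + a = a + b) (n : ℕ) : (n + 1) • a = a + n • b := by
  induction n with
  | zero => simp
  | succ n ih =>
    calc (n + 1 + 1) • a = a + (n + 1) • a := by rw [succ_nsmul, add_comm]
      _ = (a + a) + n • b := by rw [ih, add_assoc]
      _ = a + (n + 1) • b := by rw [h, add_assoc, succ_nsmul', add_comm b]

theorem omega_smul_of_idempotent_general {V H : Type*} [Monoid V] [AddCommMonoid H]
    [MulAction V H]
    (path : ∀ (v : V) (g h : H), v • g + v • h = v • (g + h) + v • (0 : H))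
    (k : ℕ) (aper : ∀ x : H, (k + 1) • x = k • x) :
    ∀ (v : V) (e : H), e + e = e →
      k • (v • e) = v • e + k • (v • (0 : H)) := by
  intro v e he
  have hdouble : v • e + v • e = v • e + v • (0 : H) := by rw [path v e e, he]
  rw [← aper, succ_nsmul_eq_add_nsmul_of_add_self_eq hdouble]

/-- In an aperiodic path algebra, for an additively idempotent `e`:
`ω • (v • e) = v • e + ω • (v • 0)`. -/
theorem omega_smul_of_idempotent {V H : Type*} [Monoid V] [AddCommMonoid H]
    [MulAction V H]
    (path : ∀ (v : V) (g h : H), v • g + v • h = v • (g + h) + v • (0 : H))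
    (k : ℕ) (hk : 1 ≤ k) (aper : ∀ x : H, (k + 1) • x = k • x) :
    ∀ (v : V) (e : H), e + e = e →
      k • (v • e) = v • e + k • (v • (0 : H)) :=
  omega_smul_of_idempotent_general path k aper
end

section
/- Let a monoid V act on an additive commutative monoid H, suppose the path identity holds, and let k ≥ 1 be such that (k+1) • x = k • x for all x : H. Then for every v : V and all additively idempotent e₁, e₂ : H (eᵢ + eᵢ = eᵢ): k • (v • (e₁ + e₂)) = k • (v • e₁) + k • (v • e₂). (Distributivity of the induced map v̄(e) = ω•(v•e) on idempotents.) -/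
/-- Distributivity of the induced map `v̄(e) = ω • (v • e)` on additive
idempotents in an aperiodic path algebra. -/
theorem induced_map_distributive {V H : Type*} [Monoid V] [AddCommMonoid H]
    [MulAction V H]
    (path : ∀ (v : V) (g h : H), v • g + v • h = v • (g + h) + v • (0 : H))
    (k : ℕ) (hk : 1 ≤ k) (aper : ∀ x : H, (k + 1) • x = k • x) :
    ∀ (v : V) (e₁ e₂ : H), e₁ + e₁ = e₁ → e₂ + e₂ = e₂ →
      k • (v • (e₁ + e₂)) = k • (v • e₁) + k • (v • e₂) := by
  have key : ∀ x : H, k • x + k • x = k • x := by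
    intro x
    have h1 : k • x + x = k • x := by
      have := aper x
      rwa [succ_nsmul] at this
    have hmain : ∀ m : ℕ, k • x + m • x = k • x := by
      intro m
      induction m with
      | zero => simp
      | succ n ih => rw [succ_nsmul, ← add_assoc, ih, h1]
    exact hmain k
  intro v e₁ e₂ h1 h2
  have hcc : (e₁ + e₂) + (e₁ + e₂) = e₁ + e₂ := by
    rw [add_add_add_comm, h1, h2]
  have pc := path v (e₁ + e₂) (e₁ + e₂)
  rw [hcc] at pc
  have pab := path v e₁ e₂
  calc k • (v • (e₁ + e₂))
      = k • (v • (e₁ + e₂)) + k • (v • (e₁ + e₂)) := (key _).symm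
    _ = k • (v • (e₁ + e₂) + v • (e₁ + e₂)) := by rw [smul_add]
    _ = k • (v • (e₁ + e₂) + v • (0 : H)) := by rw [pc]
    _ = k • (v • e₁ + v • e₂) := by rw [← pab]
    _ = k • (v • e₁) + k • (v • e₂) := by rw [smul_add]
end

section
/- Let a monoid V act on an additive commutative monoid H, suppose the path identity holds, and let k ≥ 1 be such that (k+1) • x = k • x for all x : H. Then for all v₁, v₂ : V and every additively idempotent e : H (e + e = e): k • ((v₁ * v₂) • e) = k • (v₁ • (k • (v₂ • e))). (Multiplicativity of the induced map v̄(e) = ω•(v•e) on idempotents.) -/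
/-!
Writing `k = m + 1`, the iterated path identity gives
`k • (v • y) = v • (k • y) + m • (v • 0)`. Applied with `v = v₁` to `y = v₂ • e` and to
`y = k • (v₂ • e)`, it reduces the claim to `k • (k • y) = k • y`, which is aperiodicity
since `k ≤ k * k`.
-/

lemma succ_nsmul_smul_eq {V H : Type*} [SMul V H] [AddCommMonoid H] {v : V}
    (path : ∀ g h : H, v • g + v • h = v • (g + h) + v • (0 : H)) (h : H) (n : ℕ) :
    (n + 1) • (v • h) = v • ((n + 1) • h) + n • (v • (0 : H)) := by
  induction n with
  | zero => simp
  | succ n ih =>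
    calc (n + 1 + 1) • (v • h) = v • h + (n + 1) • (v • h) := succ_nsmul' _ _
      _ = (v • h + v • ((n + 1) • h)) + n • (v • (0 : H)) := by rw [ih, add_assoc]
      _ = v • ((n + 1 + 1) • h) + (n + 1) • (v • (0 : H)) := by
        rw [path, ← succ_nsmul', add_assoc, add_comm (v • (0 : H)), ← succ_nsmul]

lemma nsmul_eq_of_le_of_succ_nsmul_eq {H : Type*} [AddMonoid H] {k n : ℕ} {x : H}
    (hx : (k + 1) • x = k • x) (hkn : k ≤ n) : n • x = k • x := by
  induction n, hkn using Nat.le_induction with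
  | base => rfl
  | succ n _ ih => rw [succ_nsmul, ih, ← succ_nsmul, hx]

lemma nsmul_nsmul_eq_of_succ_nsmul_eq {H : Type*} [AddMonoid H] {k : ℕ}
    (aper : ∀ x : H, (k + 1) • x = k • x) (x : H) : k • (k • x) = k • x := by
  rw [← mul_nsmul', nsmul_eq_of_le_of_succ_nsmul_eq (aper x) (Nat.le_mul_self k)]

theorem induced_map_multiplicative_general {V H : Type*} [Monoid V] [AddCommMonoid H]
    [MulAction V H]
    (path : ∀ (v : V) (g h : H), v • g + v • h = v • (g + h) + v • (0 : H))
    (k : ℕ) (aper : ∀ x : H, (k + 1) • x = k • x) :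
    ∀ (v₁ v₂ : V) (e : H), e + e = e →
      k • ((v₁ * v₂) • e) = k • (v₁ • (k • (v₂ • e))) := by
  intro v₁ v₂ e _
  cases k with
  | zero => simp only [zero_smul]
  | succ m =>
    rw [mul_smul, succ_nsmul_smul_eq (path v₁), succ_nsmul_smul_eq (path v₁),
      nsmul_nsmul_eq_of_succ_nsmul_eq aper]

/-- Multiplicativity of the induced map `v̄(e) = ω • (v • e)` on additive
idempotents in an aperiodic path algebra. -/
theorem induced_map_multiplicative {V H : Type*} [Monoid V] [AddCommMonoid H]
    [MulAction V H]
    (path : ∀ (v : V) (g h : H), v • g + v • h = v • (g + h) + v • (0 : H))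
    (k : ℕ) (hk : 1 ≤ k) (aper : ∀ x : H, (k + 1) • x = k • x) :
    ∀ (v₁ v₂ : V) (e : H), e + e = e →
      k • ((v₁ * v₂) • e) = k • (v₁ • (k • (v₂ • e))) :=
  induced_map_multiplicative_general path k aper
end

section
/- Let a monoid V act on an additive commutative monoid H, suppose the path identity holds, and let k ≥ 1 be such that (k+1) • x = k • x for all x : H. Then for every v : V and h : H: k • (v • h) = k • (v • (k • h)). (The map h ↦ ω•h, v ↦ v̄ preserves the action of contexts on forests.) -/
private lemma smul_dist {V H : Type*} [Monoid V] [AddCommMonoid H] [MulAction V H]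
    (path : ∀ (v : V) (g h : H), v • g + v • h = v • (g + h) + v • (0 : H)) :
    ∀ (n : ℕ) (v : V) (h : H),
      (n + 1) • (v • h) = v • ((n + 1) • h) + n • (v • (0 : H)) := by
  intro n
  induction n with
  | zero => intro v h; simp
  | succ m ih =>
    intro v h
    calc (m + 1 + 1) • (v • h)
        = v • ((m + 1) • h) + m • (v • (0:H)) + v • h := by rw [succ_nsmul, ih]
      _ = (v • ((m + 1) • h) + v • h) + m • (v • (0:H)) := by abel
      _ = (v • ((m + 1) • h + h) + v • (0:H)) + m • (v • (0:H)) := by rw [path]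
      _ = v • ((m + 1 + 1) • h) + (m + 1) • (v • (0:H)) := by
          rw [succ_nsmul h (m+1), succ_nsmul (v • (0:H)) m]; abel

private lemma aper_ge {H : Type*} [AddCommMonoid H] (k : ℕ)
    (aper : ∀ x : H, (k + 1) • x = k • x) :
    ∀ (m : ℕ), k ≤ m → ∀ x : H, m • x = k • x := by
  intro m hm
  induction m, hm using Nat.le_induction with
  | base => intro x; rfl
  | succ n hn ih =>
    intro x
    rw [show n + 1 = n + 1 from rfl, add_nsmul, one_nsmul]
    have := ih x
    calc n • x + x = k • x + x := by rw [this]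
      _ = (k + 1) • x := by rw [add_nsmul, one_nsmul]
      _ = k • x := aper x

/-- The map `h ↦ ω • h` is compatible with the action: in an aperiodic path
algebra, `ω • (v • h) = ω • (v • (ω • h))`. -/
theorem omega_map_action_compatible {V H : Type*} [Monoid V] [AddCommMonoid H]
    [MulAction V H]
    (path : ∀ (v : V) (g h : H), v • g + v • h = v • (g + h) + v • (0 : H))
    (k : ℕ) (hk : 1 ≤ k) (aper : ∀ x : H, (k + 1) • x = k • x) :
    ∀ (v : V) (h : H), k • (v • h) = k • (v • (k • h)) := by
  intro v h
  obtain ⟨j, rfl⟩ : ∃ j, k = j + 1 := ⟨k - 1, (Nat.succ_pred_eq_of_pos hk).symm⟩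
  have h1 := smul_dist path j v h
  have h2 := smul_dist path j v ((j + 1) • h)
  have key : (j + 1) • ((j + 1) • h) = (j + 1) • h := by
    rw [← mul_nsmul]
    exact aper_ge (j + 1) aper ((j+1)*(j+1)) (Nat.le_mul_of_pos_left _ (Nat.succ_pos j)) h
  rw [h1, h2, key]
end

section
/- Let a monoid V act on an additive commutative monoid H, suppose the path identity holds, and let k ≥ 1 be such that (k+1) • x = k • x for all x : H. Then for all u, w : V: k • ((u * w) • 0) + u • 0 = k • ((u * w) • 0). (The element ω•(uw0) absorbs u0.) -/
/-!
Iterating the path identity gives `(n + 1) • (v • a) = v • ((n + 1) • a) + n • (v • 0)`: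
each application of the identity merges one more copy of `a` under `v` at the cost of one `v • 0`.
With `a = w • 0` this rewrites `k • (uw0) + u0` as `u • (k • a) + k • u0`, and aperiodicity of `a`
turns it into `u • ((k + 1) • a) + k • u0 = (k + 1) • (uw0)`, which aperiodicity reduces to `k • (uw0)`.
-/

section PathIdentity

variable {V H : Type*} [Monoid V] [AddCommMonoid H] [MulAction V H]
  (path : ∀ (v : V) (g h : H), v • g + v • h = v • (g + h) + v • (0 : H))
include path

theorem succ_nsmul_smul_of_path_s13 (v : V) (a : H) (n : ℕ) :
    (n + 1) • (v • a) = v • ((n + 1) • a) + n • (v • (0 : H)) := by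
  induction n with
  | zero => simp
  | succ n ih =>
    rw [succ_nsmul (v • a), ih, add_right_comm, path, ← succ_nsmul, add_assoc,
      ← succ_nsmul']

theorem nsmul_smul_add_smul_zero_of_path (v : V) (a : H) (n : ℕ) :
    n • (v • a) + v • (0 : H) = v • (n • a) + n • (v • (0 : H)) := by
  cases n with
  | zero => simp
  | succ n => rw [succ_nsmul_smul_of_path_s13 path, add_assoc, ← succ_nsmul]

end PathIdentity

theorem omega_uw_absorbs_general {V H : Type*} [Monoid V] [AddCommMonoid H]
    [MulAction V H]
    (path : ∀ (v : V) (g h : H), v • g + v • h = v • (g + h) + v • (0 : H))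
    (k : ℕ) (aper : ∀ x : H, (k + 1) • x = k • x) :
    ∀ u w : V, k • ((u * w) • (0 : H)) + u • (0 : H) = k • ((u * w) • (0 : H)) := by
  intro u w
  rw [mul_smul]
  calc k • (u • w • (0 : H)) + u • (0 : H)
      = u • ((k + 1) • w • (0 : H)) + k • (u • (0 : H)) := by
        rw [nsmul_smul_add_smul_zero_of_path path, aper]
    _ = (k + 1) • (u • w • (0 : H)) := (succ_nsmul_smul_of_path_s13 path u _ k).symm
    _ = k • (u • w • (0 : H)) := aper _

/-- In an aperiodic path algebra, the element `ω • (uw0)` absorbs `u0`: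
`ω • ((u * w) • 0) + u • 0 = ω • ((u * w) • 0)`. -/
theorem omega_uw_absorbs {V H : Type*} [Monoid V] [AddCommMonoid H]
    [MulAction V H]
    (path : ∀ (v : V) (g h : H), v • g + v • h = v • (g + h) + v • (0 : H))
    (k : ℕ) (hk : 1 ≤ k) (aper : ∀ x : H, (k + 1) • x = k • x) :
    ∀ u w : V, k • ((u * w) • (0 : H)) + u • (0 : H) = k • ((u * w) • (0 : H)) :=
  omega_uw_absorbs_general path k aper
end
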